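/- arXiv:1601.00843 — 3 statements merged into one kernel-verified Lean document; each statement's English description precedes it below -/
import Mathlib

section
/- Suppose x_ref > 0, α_on > 0, β > 0 with β > 2·x_ref·α_on, and define x_border = β/α_on + (x_ref − β/α_on)·e^{α_on}. If additionally β < (e^{α_on}/(e^{α_on}−1))·x_ref·α_on, then 0 < x_border < x_ref. -/
/-! With `k = β / α_on` and `E = exp α_on > 1`, `x_border - x_ref = (x_ref - k) (E - 1)` and
`x_border = x_ref E - k (E - 1)`. So `x_border < x_ref` says `x_ref α_on < β`, which follows from
`2 x_ref α_on < β`, and `0 < x_border` is exactly the upper bound on `β`. -/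

section AffineExtrapolation

variable {K : Type*} [Field K] [LinearOrder K] [IsStrictOrderedRing K] {x k E : K}

theorem add_sub_mul_lt_self_iff (hE : 1 < E) : k + (x - k) * E < x ↔ x < k := by
  rw [← sub_pos, show x - (k + (x - k) * E) = (k - x) * (E - 1) by ring,
    mul_pos_iff_of_pos_right (sub_pos.2 hE), sub_pos]

theorem add_sub_mul_pos_iff (hE : 1 < E) : 0 < k + (x - k) * E ↔ k < E / (E - 1) * x := by
  rw [show k + (x - k) * E = x * E - k * (E - 1) by ring, sub_pos,
    ← lt_div_iff₀ (sub_pos.2 hE), div_mul_eq_mul_div, mul_comm x E]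

end AffineExtrapolation

theorem xborder_in_interval_general (x_ref α_on β : ℝ)
    (hx : 0 < x_ref) (hα : 0 < α_on)
    (hβ1 : 2 * x_ref * α_on < β)
    (hβ2 : β < (Real.exp α_on / (Real.exp α_on - 1)) * x_ref * α_on) :
    0 < β / α_on + (x_ref - β / α_on) * Real.exp α_on ∧
      β / α_on + (x_ref - β / α_on) * Real.exp α_on < x_ref := by
  have hE : 1 < Real.exp α_on := Real.one_lt_exp_iff.mpr hα
  refine ⟨(add_sub_mul_pos_iff hE).2 ?_, (add_sub_mul_lt_self_iff hE).2 ?_⟩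
  · rwa [div_lt_iff₀ hα]
  · rw [lt_div_iff₀ hα]
    linarith [mul_pos hx hα]

theorem xborder_in_interval (x_ref α_on β : ℝ)
    (hx : 0 < x_ref) (hα : 0 < α_on) (hβ : 0 < β)
    (hβ1 : 2 * x_ref * α_on < β)
    (hβ2 : β < (Real.exp α_on / (Real.exp α_on - 1)) * x_ref * α_on) :
    0 < β / α_on + (x_ref - β / α_on) * Real.exp α_on ∧
      β / α_on + (x_ref - β / α_on) * Real.exp α_on < x_ref :=
  xborder_in_interval_general x_ref α_on β hx hα hβ1 hβ2
end

section
/- Under Assumption 2.1 (x_ref > 0, 0 < α_on < log 2, 2·x_ref·α_on < β < (e^{α_on}/(e^{α_on}−1))·x_ref·α_on, and α_on < α_off < ((β/α_on − x_ref)/x_ref)·α_on), the map f : [0, x_ref] → [0, x_ref] defined piecewise by f(x) = β/α_on + (x − β/α_on)·e^{−α_on} for 0 ≤ x ≤ x_border and f(x) = x_ref·e^{−α_off}·((β/α_on − x)/(β/α_on − x_ref))^{α_off/α_on} for x_border < x ≤ x_ref, where x_border = β/α_on + (x_ref − β/α_on)·e^{α_on}, maps [0, x_ref] into [0, x_ref].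 -/
/-- The border point `x_border`. -/
noncomputable def xBorder (α_on β x_ref : ℝ) : ℝ :=
  β / α_on + (x_ref - β / α_on) * Real.exp α_on

/-- The stroboscopic (period-1) map of the deterministic switching buck converter. -/
noncomputable def strobo (α_on α_off β x_ref : ℝ) (x : ℝ) : ℝ :=
  if x ≤ xBorder α_on β x_ref then
    β / α_on + (x - β / α_on) * Real.exp (-α_on)
  else
    x_ref * Real.exp (-α_off) *
      ((β / α_on - x) / (β / α_on - x_ref)) ^ (α_off / α_on)

/-!
Write `c = β / α_on`. On `[0, x_border]` the map is the increasing affine contraction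
`x ↦ c + (x - c) e^{-α_on}` towards `c ≥ 0`, which sends `x_border` exactly to `x_ref`.
Beyond `x_border` the base `(c - x) / (c - x_ref)` of the power lies in `[0, e^{α_on}]`, so the
power is at most `(e^{α_on})^{α_off / α_on} = e^{α_off}`, which the prefactor `x_ref e^{-α_off}`
cancels.
-/

open Real Set

section

variable {a b c r x : ℝ}

lemma add_sub_mul_exp_neg_le_iff : c + (x - c) * exp (-a) ≤ r ↔ x ≤ c + (r - c) * exp a := by
  rw [exp_neg, ← div_eq_mul_inv, ← le_sub_iff_add_le', div_le_iff₀ (exp_pos a)]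
  exact sub_le_iff_le_add'

lemma add_sub_mul_exp_neg_nonneg (ha : 0 ≤ a) (hc : 0 ≤ c) (hx : 0 ≤ x) :
    0 ≤ c + (x - c) * exp (-a) := by
  have hexp_le_one : exp (-a) ≤ 1 := exp_le_one_iff.mpr (neg_nonpos.mpr ha)
  nlinarith [exp_pos (-a)]

lemma mul_exp_neg_mul_rpow_div_le {y : ℝ} (hr : 0 ≤ r) (ha : 0 < a) (hb : 0 ≤ b) (hy : 0 ≤ y)
    (hya : y ≤ exp a) : r * exp (-b) * y ^ (b / a) ≤ r :=
  calc r * exp (-b) * y ^ (b / a) ≤ r * exp (-b) * exp a ^ (b / a) := by gcongr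
    _ = r := by
      rw [← exp_mul, mul_div_cancel₀ _ ha.ne', mul_assoc, ← exp_add, neg_add_cancel, exp_zero,
        mul_one]

lemma mul_exp_neg_mul_rpow_div_mem_Icc (hr : 0 ≤ r) (hrc : r < c) (ha : 0 < a) (hb : 0 ≤ b)
    (hx : c + (r - c) * exp a ≤ x) (hxc : x ≤ c) :
    r * exp (-b) * ((c - x) / (c - r)) ^ (b / a) ∈ Icc 0 r := by
  have hcr : 0 < c - r := sub_pos.mpr hrc
  have hbase : 0 ≤ (c - x) / (c - r) := div_nonneg (sub_nonneg.mpr hxc) hcr.le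
  have hbase_le : (c - x) / (c - r) ≤ exp a := by
    rw [div_le_iff₀ hcr]
    linarith
  exact ⟨mul_nonneg (mul_nonneg hr (exp_pos _).le) (rpow_nonneg hbase _),
    mul_exp_neg_mul_rpow_div_le hr ha hb hbase hbase_le⟩

end

theorem strobo_mapsTo_general (x_ref α_on α_off β : ℝ)
    (hx : 0 < x_ref) (hα : 0 < α_on)
    (hβ1 : 2 * x_ref * α_on < β)
    (hoff1 : α_on < α_off) :
    Set.MapsTo (strobo α_on α_off β x_ref) (Set.Icc 0 x_ref) (Set.Icc 0 x_ref) := by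
  rintro x ⟨hx0, hxr⟩
  have hrc : x_ref < β / α_on := by
    rw [lt_div_iff₀ hα]
    nlinarith
  rw [strobo, xBorder]
  split_ifs with hborder
  · exact ⟨add_sub_mul_exp_neg_nonneg hα.le (hx.trans hrc).le hx0,
      add_sub_mul_exp_neg_le_iff.mpr hborder⟩
  · exact mul_exp_neg_mul_rpow_div_mem_Icc hx.le hrc hα (hα.trans hoff1).le
      (not_le.mp hborder).le (hxr.trans hrc.le)

theorem strobo_mapsTo (x_ref α_on α_off β : ℝ)
    (hx : 0 < x_ref) (hα : 0 < α_on) (hα2 : α_on < Real.log 2)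
    (hβ1 : 2 * x_ref * α_on < β)
    (hβ2 : β < (Real.exp α_on / (Real.exp α_on - 1)) * x_ref * α_on)
    (hoff1 : α_on < α_off)
    (hoff2 : α_off < ((β / α_on - x_ref) / x_ref) * α_on) :
    Set.MapsTo (strobo α_on α_off β x_ref) (Set.Icc 0 x_ref) (Set.Icc 0 x_ref) :=
  strobo_mapsTo_general x_ref α_on α_off β hx hα hβ1 hoff1
end

section
/- Under Assumption 2.1, the stroboscopic map f has a unique fixed point x*, and it lies in the open interval (x_border, x_ref). -/
/-!
On `[0, x_border]` the map is the affine contraction towards `β / α_on > x_ref`, so every point is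
moved strictly upwards and there is no fixed point. On `(x_border, x_ref]` the map is the strictly
decreasing power branch; it takes the value `x_ref > x_border` at `x_border` and `x_ref e^{-α_off} < x_ref`
at `x_ref`, so the intermediate value theorem gives a fixed point in `(x_border, x_ref)`, and strict
monotonicity makes it the only one.
-/

open Set Function

theorem StrictAntiOn.eq_of_isFixedPt {α : Type*} [LinearOrder α] {f : α → α} {s : Set α}
    (hf : StrictAntiOn f s) {x y : α} (hx : x ∈ s) (hy : y ∈ s) (hfx : IsFixedPt f x)
    (hfy : IsFixedPt f y) : x = y := by
  by_contra hne
  rcases lt_or_gt_of_ne hne with hlt | hlt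
  · have := hf hx hy hlt
    rw [hfx, hfy] at this
    exact lt_asymm hlt this
  · have := hf hy hx hlt
    rw [hfx, hfy] at this
    exact lt_asymm hlt this

theorem exists_mem_Ioo_isFixedPt {α : Type*} [ConditionallyCompleteLinearOrder α]
    [TopologicalSpace α] [OrderTopology α] [DenselyOrdered α] {f : α → α} {a b : α}
    (hf : ContinuousOn f (Icc a b)) (hle : a ≤ b) (ha : a < f a) (hb : f b < b) :
    ∃ c ∈ Ioo a b, IsFixedPt f c := by
  obtain ⟨c, ⟨hac, hcb⟩, hc⟩ := exists_mem_Icc_isFixedPt hf hle ha.le hb.le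
  refine ⟨c, ⟨hac.lt_of_ne ?_, hcb.lt_of_ne ?_⟩, hc⟩
  · rintro rfl
    exact ha.ne' hc
  · rintro rfl
    exact hb.ne hc

theorem lt_add_sub_mul_exp_neg {α b y : ℝ} (hα : 0 < α) (hy : y < b) :
    y < b + (y - b) * Real.exp (-α) := by
  have : Real.exp (-α) < 1 := Real.exp_lt_one_iff.mpr (neg_neg_of_pos hα)
  nlinarith

noncomputable def stroboOff (α_on α_off β x_ref : ℝ) (x : ℝ) : ℝ :=
  x_ref * Real.exp (-α_off) * ((β / α_on - x) / (β / α_on - x_ref)) ^ (α_off / α_on)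

section

variable {α_on α_off β x_ref : ℝ}

theorem strobo_of_le_xBorder {x : ℝ} (hx : x ≤ xBorder α_on β x_ref) :
    strobo α_on α_off β x_ref x = β / α_on + (x - β / α_on) * Real.exp (-α_on) :=
  if_pos hx

theorem strobo_of_xBorder_lt {x : ℝ} (hx : xBorder α_on β x_ref < x) :
    strobo α_on α_off β x_ref x = stroboOff α_on α_off β x_ref x :=
  if_neg hx.not_ge

theorem xBorder_lt_div (hb : x_ref < β / α_on) : xBorder α_on β x_ref < β / α_on := by
  have := Real.exp_pos α_on
  unfold xBorder
  nlinarith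

theorem xBorder_lt (hα : 0 < α_on) (hb : x_ref < β / α_on) : xBorder α_on β x_ref < x_ref := by
  have := Real.add_one_le_exp α_on
  unfold xBorder
  nlinarith

theorem stroboOff_xBorder (hα : 0 < α_on) (hb : x_ref < β / α_on) :
    stroboOff α_on α_off β x_ref (xBorder α_on β x_ref) = x_ref := by
  have hratio : (β / α_on - xBorder α_on β x_ref) / (β / α_on - x_ref) = Real.exp α_on := by
    rw [xBorder, show β / α_on - (β / α_on + (x_ref - β / α_on) * Real.exp α_on) =
      (β / α_on - x_ref) * Real.exp α_on by ring, mul_div_cancel_left₀ _ (sub_ne_zero.mpr hb.ne')]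
  rw [stroboOff, hratio, ← Real.exp_mul, mul_div_cancel₀ _ hα.ne', mul_assoc, ← Real.exp_add,
    neg_add_cancel, Real.exp_zero, mul_one]

theorem stroboOff_self_lt (hx : 0 < x_ref) (hoff : 0 < α_off) (hb : x_ref ≠ β / α_on) :
    stroboOff α_on α_off β x_ref x_ref < x_ref := by
  have : Real.exp (-α_off) < 1 := Real.exp_lt_one_iff.mpr (neg_neg_of_pos hoff)
  rw [stroboOff, div_self (sub_ne_zero.mpr hb.symm), Real.one_rpow, mul_one]
  nlinarith

theorem continuous_stroboOff (hp : 0 ≤ α_off / α_on) : Continuous (stroboOff α_on α_off β x_ref) :=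
  continuous_const.mul <|
    ((continuous_const.sub continuous_id).div_const _).rpow_const fun _ ↦ Or.inr hp

theorem strictAntiOn_stroboOff (hx : 0 < x_ref) (hp : 0 < α_off / α_on)
    (hb : x_ref < β / α_on) : StrictAntiOn (stroboOff α_on α_off β x_ref) (Iic (β / α_on)) := by
  intro u hu v hv huv
  have hden : 0 < β / α_on - x_ref := sub_pos.mpr hb
  have hbase : (β / α_on - v) / (β / α_on - x_ref) < (β / α_on - u) / (β / α_on - x_ref) := by
    gcongr
  have hv0 : 0 ≤ (β / α_on - v) / (β / α_on - x_ref) := div_nonneg (sub_nonneg.mpr hv) hden.le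
  exact mul_lt_mul_of_pos_left (Real.rpow_lt_rpow hv0 hbase hp) (mul_pos hx (Real.exp_pos _))

end

theorem strobo_unique_fixed_point_general (x_ref α_on α_off β : ℝ)
    (hx : 0 < x_ref) (hα : 0 < α_on)
    (hβ1 : 2 * x_ref * α_on < β)
    (hoff1 : α_on < α_off) :
    ∃ xstar : ℝ,
      (xstar ∈ Set.Ioo (xBorder α_on β x_ref) x_ref ∧
        strobo α_on α_off β x_ref xstar = xstar) ∧
      ∀ y ∈ Set.Icc 0 x_ref, strobo α_on α_off β x_ref y = y → y = xstar := by
  have hb : x_ref < β / α_on := by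
    rw [lt_div_iff₀ hα]
    nlinarith
  have hp : 0 < α_off / α_on := div_pos (hα.trans hoff1) hα
  have hxb := xBorder_lt hα hb
  obtain ⟨xstar, hxstar, hfix⟩ := exists_mem_Ioo_isFixedPt
    (continuous_stroboOff (β := β) (x_ref := x_ref) hp.le).continuousOn hxb.le
    (by rwa [stroboOff_xBorder hα hb]) (stroboOff_self_lt hx (hα.trans hoff1) hb.ne)
  have hxstar_le : xstar ≤ β / α_on := (hxstar.2.trans hb).le
  refine ⟨xstar, ⟨hxstar, (strobo_of_xBorder_lt hxstar.1).trans hfix⟩, fun y hy hfy ↦ ?_⟩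
  rcases le_or_gt y (xBorder α_on β x_ref) with hyb | hyb
  · rw [strobo_of_le_xBorder hyb] at hfy
    exact absurd hfy (lt_add_sub_mul_exp_neg hα (hyb.trans_lt (xBorder_lt_div hb))).ne'
  · rw [strobo_of_xBorder_lt hyb] at hfy
    exact (strictAntiOn_stroboOff hx hp hb).eq_of_isFixedPt (hy.2.trans hb.le) hxstar_le hfy hfix

theorem strobo_unique_fixed_point (x_ref α_on α_off β : ℝ)
    (hx : 0 < x_ref) (hα : 0 < α_on) (hα2 : α_on < Real.log 2)
    (hβ1 : 2 * x_ref * α_on < β)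
    (hβ2 : β < (Real.exp α_on / (Real.exp α_on - 1)) * x_ref * α_on)
    (hoff1 : α_on < α_off)
    (hoff2 : α_off < ((β / α_on - x_ref) / x_ref) * α_on) :
    ∃ xstar : ℝ,
      (xstar ∈ Set.Ioo (xBorder α_on β x_ref) x_ref ∧
        strobo α_on α_off β x_ref xstar = xstar) ∧
      ∀ y ∈ Set.Icc 0 x_ref, strobo α_on α_off β x_ref y = y → y = xstar :=
  strobo_unique_fixed_point_general x_ref α_on α_off β hx hα hβ1 hoff1
end
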